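/- arXiv:2007.03830 — 2 statements merged into one kernel-verified Lean document; each statement's English description precedes it below -/
import Mathlib

section
/- Let $f_i : \mathbb{R} \to \mathbb{R} \cup \{+\infty\}$, $i = 1, \dots, N$, be proper closed strictly convex functions with $\mathrm{dom}\, f_i \subset [0,1]$, and let $F(w) = \sum_{i=1}^N f_i(w^i) + \delta_\Delta(w)$. Fix $\psi_1 \in \mathbb{R}^N$, $\gamma > 0$, and an index $k$. Then for every $j \neq k$, $\frac{\partial F^*}{\partial \psi^j}(\psi_1 + \gamma e_k) \leq \frac{\partial F^*}{\partial \psi^j}(\psi_1)$, where $e_k$ is the $k$-th standard basis vector. -/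
noncomputable section
open scoped BigOperators Classical

abbrev E (N : ℕ) := EuclideanSpace ℝ (Fin N)

def simplex (N : ℕ) : Set (E N) := {w | (∑ i, w i) = 1 ∧ ∀ i, 0 ≤ w i}

/-- Strict convexity (on the effective domain) for extended-real-valued functions on ℝ. -/
def StrictConvex1 (f : ℝ → EReal) : Prop :=
  ∀ x y : ℝ, f x ≠ ⊤ → f y ≠ ⊤ → x ≠ y → ∀ t : ℝ, 0 < t → t < 1 →
    f (t * x + (1 - t) * y) < (t : EReal) * f x + ((1 - t : ℝ) : EReal) * f y

/-- One-dimensional subdifferential of an extended-real-valued function. -/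
def subdiff1 (f : ℝ → EReal) (x : ℝ) : Set ℝ :=
  {p | ∀ y : ℝ, f x + ((p * (y - x) : ℝ) : EReal) ≤ f y}

/-- The convex (Legendre–Fenchel) conjugate. -/
def conj {N : ℕ} (F : E N → EReal) (ψ : E N) : EReal :=
  ⨆ w : E N, ((inner ℝ ψ w : ℝ) : EReal) - F w

/-! `F^*` is submodular along two distinct coordinate directions: for `t, γ ≥ 0` and `j ≠ k`,
`F^*(ψ + t e_j + γ e_k) + F^*(ψ) ≤ F^*(ψ + t e_j) + F^*(ψ + γ e_k)`.
Indeed, given `u, v` in the simplex (competitors for `ψ + t e_j + γ e_k` and for `ψ`), an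
intermediate value argument on a box yields `w` of total mass one with each `w^i` between `u^i`
and `v^i`, `w^j ≥ u^j` and `w^k ≤ v^k`. Then `w` and `u + v - w` lie in the simplex, convexity of
every `f_i` gives `F w + F (u + v - w) ≤ F u + F v`, and the linear terms can only increase when
`w` is used for `ψ + t e_j` and `u + v - w` for `ψ + γ e_k`.
Hence `F^* - F^*(· + γ e_k)` does not decrease along `e_j`, and its derivative in that direction,
`∂_j F^*(ψ₁) - ∂_j F^*(ψ₁ + γ e_k)`, is nonnegative. -/

open Set

theorem EReal.coe_finset_sum {ι : Type*} (s : Finset ι) (r : ι → ℝ) :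
    ((∑ i ∈ s, r i : ℝ) : EReal) = ∑ i ∈ s, (r i : EReal) :=
  map_sum (⟨⟨Real.toEReal, EReal.coe_zero⟩, EReal.coe_add⟩ : ℝ →+ EReal) r s

theorem EReal.sum_ne_bot {ι : Type*} (s : Finset ι) {x : ι → EReal} (h : ∀ i ∈ s, x i ≠ ⊥) :
    ∑ i ∈ s, x i ≠ ⊥ :=
  Finset.sum_induction _ (· ≠ ⊥) (fun _ _ ha hb => by simp [EReal.add_eq_bot_iff, ha, hb])
    EReal.zero_ne_bot h

theorem EReal.coe_sub_add_coe_sub_le {a b c d : ℝ} {x y x' y' : EReal} (hx : x ≠ ⊤) (hy : y ≠ ⊤)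
    (hx' : x' ≠ ⊥) (hy' : y' ≠ ⊥) (hxy : x' + y' ≤ x + y) (habcd : a + b ≤ c + d) :
    (a - x) + (b - y) ≤ (c - x') + (d - y') := by
  have hsum_bot : x + y ≠ ⊥ := fun h => by
    rw [h, le_bot_iff, EReal.add_eq_bot_iff] at hxy
    exact hxy.elim hx' hy'
  have hx_bot : x ≠ ⊥ := fun h => hsum_bot (by rw [h, EReal.bot_add])
  have hy_bot : y ≠ ⊥ := fun h => hsum_bot (by rw [h, EReal.add_bot])
  lift x to ℝ using ⟨hx, hx_bot⟩
  lift y to ℝ using ⟨hy, hy_bot⟩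
  have hx'_top : x' ≠ ⊤ := fun h => by
    rw [h, EReal.top_add_of_ne_bot hy', top_le_iff] at hxy
    exact EReal.coe_ne_top (x + y) hxy
  have hy'_top : y' ≠ ⊤ := fun h => by
    rw [h, EReal.add_top_of_ne_bot hx', top_le_iff] at hxy
    exact EReal.coe_ne_top (x + y) hxy
  lift x' to ℝ using ⟨hx'_top, hx'⟩
  lift y' to ℝ using ⟨hy'_top, hy'⟩
  norm_cast at hxy ⊢
  linarith

theorem LowerSemicontinuousOn.exists_coe_le {α : Type*} [TopologicalSpace α] {s : Set α}
    {f : α → EReal} (hs : IsCompact s) (hf : LowerSemicontinuousOn f s)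
    (hbot : ∀ x ∈ s, f x ≠ ⊥) : ∃ B : ℝ, ∀ x ∈ s, (B : EReal) ≤ f x := by
  rcases s.eq_empty_or_nonempty with rfl | hne
  · exact ⟨0, fun x hx => hx.elim⟩
  obtain ⟨m, hm, hmin⟩ := hf.exists_isMinOn hne hs
  exact ⟨(f m).toReal, fun x hx => (EReal.coe_toReal_le (hbot m hm)).trans (hmin hx)⟩

theorem add_sub_mem_uIcc {x y w : ℝ} (hw : w ∈ uIcc x y) : x + y - w ∈ uIcc x y := by
  rw [mem_uIcc] at hw ⊢
  rcases hw with h | h <;> [left; right] <;> constructor <;> linarith [h.1, h.2]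

theorem exists_sum_eq_forall_mem_uIcc {ι : Type*} [Fintype ι] {u v : ι → ℝ}
    (huv : ∑ i, u i = ∑ i, v i) {j k : ι} (hjk : j ≠ k) :
    ∃ w : ι → ℝ, (∀ i, w i ∈ uIcc (u i) (v i)) ∧ ∑ i, w i = ∑ i, u i ∧ u j ≤ w j ∧ w k ≤ v k := by
  set lo : ι → ℝ := fun i => if i = j then u i else min (u i) (v i)
  set hi : ι → ℝ := fun i => if i = k then v i else max (u i) (v i)
  have hmin : ∀ i, min (u i) (v i) ≤ lo i := fun i => by
    simp only [lo]; split_ifs <;> simp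
  have hmax : ∀ i, hi i ≤ max (u i) (v i) := fun i => by
    simp only [hi]; split_ifs <;> simp
  have hlo_hi : lo ≤ hi := fun i => by
    simp only [lo, hi]; split_ifs with h₁ h₂
    · exact absurd (h₁.symm.trans h₂) hjk
    all_goals simp
  have hlo : ∑ i, lo i ≤ ∑ i, u i := Finset.sum_le_sum fun i _ => by
    simp only [lo]; split_ifs <;> simp
  have hhi : ∑ i, u i ≤ ∑ i, hi i := huv ▸ Finset.sum_le_sum fun i _ => by
    simp only [hi]; split_ifs <;> simp
  obtain ⟨w, hw, hsum⟩ := (convex_Icc lo hi).isPreconnected.intermediate_value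
    (left_mem_Icc.2 hlo_hi) (right_mem_Icc.2 hlo_hi)
    (f := fun w : ι → ℝ => ∑ i, w i) (by fun_prop) ⟨hlo, hhi⟩
  refine ⟨w, fun i => ⟨(hmin i).trans (hw.1 i), (hw.2 i).trans (hmax i)⟩, hsum, ?_, ?_⟩
  · simpa [lo] using hw.1 j
  · simpa [hi] using hw.2 k

theorem ConvexOn.map_add_map_add_sub_le {V : Type*} [AddCommGroup V] [Module ℝ V] {s : Set V}
    {φ : V → ℝ} (hφ : ConvexOn ℝ s φ) {x y w : V} (hx : x ∈ s) (hy : y ∈ s)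
    (hw : w ∈ segment ℝ x y) : φ w + φ (x + y - w) ≤ φ x + φ y := by
  obtain ⟨a, b, ha, hb, hab, rfl⟩ := hw
  have hsym : x + y - (a • x + b • y) = b • x + a • y := by
    obtain rfl : b = 1 - a := by linarith
    module
  rw [hsym]
  have h₁ := hφ.2 hx hy ha hb hab
  have h₂ := hφ.2 hx hy hb ha (by linarith)
  simp only [smul_eq_mul] at h₁ h₂
  linear_combination h₁ + h₂ + (φ x + φ y) * hab

theorem StrictConvex1.lt_coe {f : ℝ → EReal} (hf : StrictConvex1 f) (hbot : ∀ x, f x ≠ ⊥)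
    {x y : ℝ} (hx : f x ≠ ⊤) (hy : f y ≠ ⊤) (hxy : x ≠ y) {t : ℝ} (ht₀ : 0 < t) (ht₁ : t < 1) :
    f (t * x + (1 - t) * y) < ((t * (f x).toReal + (1 - t) * (f y).toReal : ℝ) : EReal) := by
  have h := hf x y hx hy hxy t ht₀ ht₁
  rwa [← EReal.coe_toReal hx (hbot x), ← EReal.coe_toReal hy (hbot y), ← EReal.coe_mul,
    ← EReal.coe_mul, ← EReal.coe_add] at h

theorem StrictConvex1.strictConvexOn_toReal {f : ℝ → EReal} (hf : StrictConvex1 f)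
    (hbot : ∀ x, f x ≠ ⊥) : StrictConvexOn ℝ {x | f x ≠ ⊤} fun x => (f x).toReal := by
  refine ⟨convex_iff_forall_pos.2 fun x hx y hy a b ha hb hab => ?_, ?_⟩
  · obtain rfl | hxy := eq_or_ne x y
    · simpa [← add_mul, hab] using hx
    obtain rfl : b = 1 - a := by linarith
    exact (hf.lt_coe hbot hx hy hxy ha (by linarith)).trans (EReal.coe_lt_top _) |>.ne
  · intro x hx y hy hxy a b ha hb hab
    obtain rfl : b = 1 - a := by linarith
    have h := hf.lt_coe hbot hx hy hxy ha (by linarith)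
    have hne : f (a * x + (1 - a) * y) ≠ ⊤ := (h.trans (EReal.coe_lt_top _)).ne
    rw [← EReal.coe_toReal hne (hbot _), EReal.coe_lt_coe_iff] at h
    simpa using h

theorem StrictConvex1.add_le {f : ℝ → EReal} (hf : StrictConvex1 f) (hbot : ∀ x, f x ≠ ⊥)
    {x y w : ℝ} (hw : w ∈ uIcc x y) : f w + f (x + y - w) ≤ f x + f y := by
  by_cases hx : f x = ⊤
  · rw [hx, EReal.top_add_of_ne_bot (hbot y)]; exact le_top
  by_cases hy : f y = ⊤
  · rw [hy, EReal.add_top_of_ne_bot (hbot x)]; exact le_top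
  have hconv := (hf.strictConvexOn_toReal hbot).convexOn
  have hdom : uIcc x y ⊆ {x | f x ≠ ⊤} := hconv.1.ordConnected.uIcc_subset hx hy
  rw [← EReal.coe_toReal (hdom hw) (hbot _),
    ← EReal.coe_toReal (hdom (add_sub_mem_uIcc hw)) (hbot _),
    ← EReal.coe_toReal hx (hbot x), ← EReal.coe_toReal hy (hbot y)]
  exact_mod_cast hconv.map_add_map_add_sub_le hx hy (segment_eq_uIcc x y ▸ hw)

section Conjugate

variable {N : ℕ}

theorem conj_eq_bot_iff {F : E N → EReal} {ψ : E N} : conj F ψ = ⊥ ↔ ∀ w, F w = ⊤ := by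
  simp [conj, iSup_eq_bot, sub_eq_add_neg, EReal.add_eq_bot_iff, EReal.neg_eq_bot_iff]

theorem conj_add_conj_le_of_exchange {F : E N → EReal} (hF : ∀ w, F w ≠ ⊥) {σ ρ ψ φ : E N}
    (hex : ∀ u v, F u ≠ ⊤ → F v ≠ ⊤ → ∃ w z, F w + F z ≤ F u + F v ∧
      inner ℝ σ u + inner ℝ ρ v ≤ inner ℝ ψ w + inner ℝ φ z) :
    conj F σ + conj F ρ ≤ conj F ψ + conj F φ := by
  refine EReal.add_le_of_forall_lt fun a ha b hb => ?_
  obtain ⟨u, hu⟩ := lt_iSup_iff.1 ha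
  obtain ⟨v, hv⟩ := lt_iSup_iff.1 hb
  have hu_top : F u ≠ ⊤ := fun h => by simp [h] at hu
  have hv_top : F v ≠ ⊤ := fun h => by simp [h] at hv
  obtain ⟨w, z, hFwz, hinner⟩ := hex u v hu_top hv_top
  calc a + b ≤ (inner ℝ σ u - F u) + (inner ℝ ρ v - F v) := add_le_add hu.le hv.le
    _ ≤ (inner ℝ ψ w - F w) + (inner ℝ φ z - F z) :=
      EReal.coe_sub_add_coe_sub_le hu_top hv_top (hF w) (hF z) hFwz hinner
    _ ≤ conj F ψ + conj F φ :=
      add_le_add (le_iSup (fun w => (inner ℝ ψ w : EReal) - F w) w)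
        (le_iSup (fun w => (inner ℝ φ w : EReal) - F w) z)

theorem toReal_conj_add_toReal_conj_le {F : E N → EReal} (htop : ∀ ψ, conj F ψ ≠ ⊤)
    {σ ρ ψ φ : E N} (h : conj F σ + conj F ρ ≤ conj F ψ + conj F φ) :
    (conj F σ).toReal + (conj F ρ).toReal ≤ (conj F ψ).toReal + (conj F φ).toReal := by
  by_cases hF : ∀ w, F w = ⊤
  · -- then `conj F ≡ ⊥`, and every `toReal` is the junk value `0`
    simp [conj_eq_bot_iff.2 hF]
  have hbot : ∀ ψ, conj F ψ ≠ ⊥ := fun ψ => mt conj_eq_bot_iff.1 hF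
  lift conj F σ to ℝ using ⟨htop σ, hbot σ⟩ with a
  lift conj F ρ to ℝ using ⟨htop ρ, hbot ρ⟩ with b
  lift conj F ψ to ℝ using ⟨htop ψ, hbot ψ⟩ with c
  lift conj F φ to ℝ using ⟨htop φ, hbot φ⟩ with d
  exact_mod_cast h

end Conjugate

section SumOnSimplex

variable {N : ℕ} {f : Fin N → ℝ → EReal}

def sumOnSimplex (f : Fin N → ℝ → EReal) (w : E N) : EReal :=
  (∑ i, f i (w i)) + if w ∈ simplex N then (0 : EReal) else ⊤

theorem mem_Icc_of_mem_simplex {w : E N} (hw : w ∈ simplex N) (i : Fin N) :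
    w i ∈ Icc (0 : ℝ) 1 :=
  ⟨hw.2 i, hw.1 ▸ Finset.single_le_sum (fun l _ => hw.2 l) (Finset.mem_univ i)⟩

theorem mem_simplex_of_forall_mem_uIcc {u v w : E N} (hu : u ∈ simplex N) (hv : v ∈ simplex N)
    (hw : ∀ i, w i ∈ uIcc (u i) (v i)) (hsum : ∑ i, w i = 1) : w ∈ simplex N :=
  ⟨hsum, fun i => le_trans (le_min (hu.2 i) (hv.2 i)) (hw i).1⟩

theorem sumOnSimplex_of_mem {w : E N} (hw : w ∈ simplex N) :
    sumOnSimplex f w = ∑ i, f i (w i) := by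
  simp [sumOnSimplex, hw]

theorem sumOnSimplex_of_notMem (hbot : ∀ i x, f i x ≠ ⊥) {w : E N} (hw : w ∉ simplex N) :
    sumOnSimplex f w = ⊤ := by
  rw [sumOnSimplex, if_neg hw, EReal.add_top_of_ne_bot (EReal.sum_ne_bot _ fun i _ => hbot i _)]

theorem sumOnSimplex_ne_bot (hbot : ∀ i x, f i x ≠ ⊥) (w : E N) : sumOnSimplex f w ≠ ⊥ := by
  by_cases hw : w ∈ simplex N
  · rw [sumOnSimplex_of_mem hw]
    exact EReal.sum_ne_bot _ fun i _ => hbot i _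
  · simp [sumOnSimplex_of_notMem hbot hw]

theorem mem_simplex_of_sumOnSimplex_ne_top (hbot : ∀ i x, f i x ≠ ⊥) {w : E N}
    (hw : sumOnSimplex f w ≠ ⊤) : w ∈ simplex N :=
  by_contra fun h => hw (sumOnSimplex_of_notMem hbot h)

theorem sumOnSimplex_add_le (hbot : ∀ i x, f i x ≠ ⊥) (hconv : ∀ i, StrictConvex1 (f i))
    {u v w : E N} (hu : u ∈ simplex N) (hv : v ∈ simplex N) (hw : ∀ i, w i ∈ uIcc (u i) (v i))
    (hsum : ∑ i, w i = 1) :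
    sumOnSimplex f w + sumOnSimplex f (u + v - w) ≤ sumOnSimplex f u + sumOnSimplex f v := by
  have hz : ∀ i, (u + v - w) i ∈ uIcc (u i) (v i) := fun i => by
    simpa using add_sub_mem_uIcc (hw i)
  have hzsum : ∑ i, (u + v - w) i = 1 := by
    simp [Finset.sum_add_distrib, Finset.sum_sub_distrib, hu.1, hv.1, hsum]
  rw [sumOnSimplex_of_mem (mem_simplex_of_forall_mem_uIcc hu hv hw hsum),
    sumOnSimplex_of_mem (mem_simplex_of_forall_mem_uIcc hu hv hz hzsum), sumOnSimplex_of_mem hu,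
    sumOnSimplex_of_mem hv, ← Finset.sum_add_distrib, ← Finset.sum_add_distrib]
  exact Finset.sum_le_sum fun i _ => by simpa using (hconv i).add_le (hbot i) (hw i)

theorem conj_sumOnSimplex_ne_top (hbot : ∀ i x, f i x ≠ ⊥)
    (hclosed : ∀ i, LowerSemicontinuous (f i)) (ψ : E N) : conj (sumOnSimplex f) ψ ≠ ⊤ := by
  choose B hB using fun i => ((hclosed i).lowerSemicontinuousOn (Icc 0 1)).exists_coe_le
    isCompact_Icc fun x _ => hbot i x
  refine ne_top_of_le_ne_top (EReal.coe_ne_top (∑ i, |ψ i| - ∑ i, B i)) (iSup_le fun w => ?_)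
  by_cases hw : w ∈ simplex N
  · have hinner : inner ℝ ψ w ≤ ∑ i, |ψ i| := by
      simp only [PiLp.inner_apply, RCLike.inner_apply, conj_trivial]
      refine Finset.sum_le_sum fun i _ => ?_
      have hwi := mem_Icc_of_mem_simplex hw i
      linarith [mul_le_mul_of_nonneg_left (le_abs_self (ψ i)) hwi.1,
        mul_le_of_le_one_left (abs_nonneg (ψ i)) hwi.2]
    have hF : ((∑ i, B i : ℝ) : EReal) ≤ sumOnSimplex f w := by
      rw [sumOnSimplex_of_mem hw, EReal.coe_finset_sum]
      exact Finset.sum_le_sum fun i _ => hB i (w i) (mem_Icc_of_mem_simplex hw i)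
    rw [EReal.coe_sub]
    exact EReal.sub_le_sub (EReal.coe_le_coe_iff.2 hinner) hF
  · rw [sumOnSimplex_of_notMem hbot hw, EReal.sub_top]
    exact bot_le

theorem conj_sumOnSimplex_add_le (hbot : ∀ i x, f i x ≠ ⊥) (hconv : ∀ i, StrictConvex1 (f i))
    (ρ : E N) {t γ : ℝ} (ht : 0 ≤ t) (hγ : 0 ≤ γ) {j k : Fin N} (hjk : j ≠ k) :
    conj (sumOnSimplex f) (ρ + t • EuclideanSpace.single j 1 + γ • EuclideanSpace.single k 1)
        + conj (sumOnSimplex f) ρ ≤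
      conj (sumOnSimplex f) (ρ + t • EuclideanSpace.single j 1)
        + conj (sumOnSimplex f) (ρ + γ • EuclideanSpace.single k 1) := by
  refine conj_add_conj_le_of_exchange (sumOnSimplex_ne_bot hbot) fun u v hu hv => ?_
  have hu := mem_simplex_of_sumOnSimplex_ne_top hbot hu
  have hv := mem_simplex_of_sumOnSimplex_ne_top hbot hv
  obtain ⟨w, hw, hwsum, huw, hwv⟩ := exists_sum_eq_forall_mem_uIcc (u := ⇑u) (v := ⇑v)
    (hu.1.trans hv.1.symm) hjk
  refine ⟨WithLp.toLp 2 w, u + v - WithLp.toLp 2 w,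
    sumOnSimplex_add_le hbot hconv hu hv hw (hwsum.trans hu.1), ?_⟩
  simp only [inner_add_left, inner_add_right, inner_sub_right, real_inner_smul_left,
    EuclideanSpace.inner_single_left, conj_trivial, one_mul]
  nlinarith [mul_nonneg ht (sub_nonneg.2 huw), mul_nonneg hγ (sub_nonneg.2 hwv)]

end SumOnSimplex

theorem HasFDerivAt.nonneg_of_forall_le_add_smul {V : Type*} [NormedAddCommGroup V]
    [NormedSpace ℝ V] {φ : V → ℝ} {φ' : V →L[ℝ] ℝ} {p u : V} (hφ : HasFDerivAt φ φ' p)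
    (hle : ∀ t : ℝ, 0 < t → φ p ≤ φ (p + t • u)) : 0 ≤ φ' u := by
  have hmin : IsMinOn φ (segment ℝ p (p + u)) p := by
    rw [segment_eq_image']
    rintro _ ⟨t, ht, rfl⟩
    rcases ht.1.eq_or_lt with rfl | ht₀
    · simp
    · simpa using hle t ht₀
  exact hmin.localize.hasFDerivWithinAt_nonneg hφ.hasFDerivWithinAt
    (mem_posTangentConeAt_of_segment_subset subset_rfl)

theorem stmt2_general {N : ℕ} (f : Fin N → ℝ → EReal)
    (hproper : ∀ i, (∃ x, f i x ≠ ⊤) ∧ ∀ x, f i x ≠ ⊥)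
    (hclosed : ∀ i, LowerSemicontinuous (f i))
    (hstrict : ∀ i, StrictConvex1 (f i))
    (F : E N → EReal)
    (hF : ∀ w, F w = (∑ i, f i (w i)) + (if w ∈ simplex N then (0 : EReal) else ⊤))
    (g : E N → E N)
    (hg : ∀ ψ : E N, HasGradientAt (fun φ => (conj F φ).toReal) (g ψ) ψ)
    (ψ₁ : E N) (γ : ℝ) (hγ : 0 < γ) (k : Fin N) :
    ∀ j : Fin N, j ≠ k →
      g (ψ₁ + γ • EuclideanSpace.single k (1 : ℝ)) j ≤ g ψ₁ j := by
  intro j hjk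
  obtain rfl : F = sumOnSimplex f := funext hF
  have hbot : ∀ i x, f i x ≠ ⊥ := fun i => (hproper i).2
  set ψ₂ := ψ₁ + γ • EuclideanSpace.single k (1 : ℝ)
  have hΔ : HasFDerivAt (fun φ => (conj (sumOnSimplex f) φ).toReal
      - (conj (sumOnSimplex f) (φ + γ • EuclideanSpace.single k 1)).toReal)
      (InnerProductSpace.toDual ℝ (E N) (g ψ₁) - InnerProductSpace.toDual ℝ (E N) (g ψ₂)) ψ₁ :=
    (hg ψ₁).hasFDerivAt.sub <| by
      simpa [Function.comp_def] using (hg ψ₂).hasFDerivAt.comp ψ₁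
        ((hasFDerivAt_id ψ₁).add_const (γ • EuclideanSpace.single k 1))
  have hmono := hΔ.nonneg_of_forall_le_add_smul (u := EuclideanSpace.single j 1) fun t ht => by
    have := toReal_conj_add_toReal_conj_le (conj_sumOnSimplex_ne_top hbot hclosed)
      (conj_sumOnSimplex_add_le hbot hstrict ψ₁ ht.le hγ.le hjk)
    linarith
  simpa [sub_nonneg, EuclideanSpace.inner_single_right] using hmono

theorem stmt2 {N : ℕ} (f : Fin N → ℝ → EReal)
    (hproper : ∀ i, (∃ x, f i x ≠ ⊤) ∧ ∀ x, f i x ≠ ⊥)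
    (hclosed : ∀ i, LowerSemicontinuous (f i))
    (hstrict : ∀ i, StrictConvex1 (f i))
    (hdom : ∀ i, {x | f i x ≠ ⊤} ⊆ Set.Icc (0 : ℝ) 1)
    (F : E N → EReal)
    (hF : ∀ w, F w = (∑ i, f i (w i)) + (if w ∈ simplex N then (0 : EReal) else ⊤))
    (g : E N → E N)
    (hg : ∀ ψ : E N, HasGradientAt (fun φ => (conj F φ).toReal) (g ψ) ψ)
    (ψ₁ : E N) (γ : ℝ) (hγ : 0 < γ) (k : Fin N) :
    ∀ j : Fin N, j ≠ k →
      g (ψ₁ + γ • EuclideanSpace.single k (1 : ℝ)) j ≤ g ψ₁ j :=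
  stmt2_general f hproper hclosed hstrict F hF g hg ψ₁ γ hγ k
end
end

section
/- Let $A = \prod_{i=1}^N [a_i, b_i]$ and $B = \prod_{i=1}^N [c_i, d_i]$ be boxes in $\mathbb{R}^N$ with $a_i \leq b_i$ and $c_i \leq d_i$, and let $\Delta = \{w : \sum_i w^i = 1,\ w^i \geq 0\}$ be the probability simplex. If $A \cap \Delta \neq \emptyset$ and $B \cap \Delta \neq \emptyset$, then the Hausdorff distance satisfies $d_{\mathcal{H}}(A \cap \Delta, B \cap \Delta) \leq 4 \sum_{i=1}^N \max(|a_i - c_i|, |b_i - d_i|)$. -/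
/-!
Fix `x ∈ A ∩ Δ`. Clamping `x` coordinatewise into `B` costs at most `δ = ∑ max |aᵢ - cᵢ| |bᵢ - dᵢ|`
in `ℓ¹` and produces a nonnegative point `z ∈ B` whose coordinate sum is within `δ` of `1`.
Moving all coordinates of `z` monotonically (up towards `d`, or down towards `max c 0`) until
the sum is exactly `1` costs exactly `|∑ zᵢ - 1| ≤ δ` in `ℓ¹`; this is possible because a point of
`B ∩ Δ` gives `∑ max cᵢ 0 ≤ 1 ≤ ∑ dᵢ`. So every point of `A ∩ Δ` is within `ℓ¹`-, hence
Euclidean, distance `2δ` of `B ∩ Δ`, and symmetrically.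
-/

noncomputable section
open scoped BigOperators

open Finset Set

lemma EuclideanSpace.dist_le_sum_abs {ι : Type*} [Fintype ι] (x y : EuclideanSpace ℝ ι) :
    dist x y ≤ ∑ i, |x i - y i| := by
  have hnonneg : 0 ≤ ∑ i, |x i - y i| := sum_nonneg fun i _ => abs_nonneg _
  rw [EuclideanSpace.dist_eq, Real.sqrt_le_left hnonneg]
  simpa [Real.dist_eq] using
    sum_sq_le_sq_sum_of_nonneg (s := univ) fun i _ => abs_nonneg (x i - y i)

section SumAdjustment

variable {ι : Type*} [Fintype ι]

lemma exists_mem_Icc_sum_eq {z w : ι → ℝ} (hzw : z ≤ w) {t : ℝ}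
    (ht : t ∈ Icc (∑ i, z i) (∑ i, w i)) :
    ∃ y ∈ Icc z w, ∑ i, y i = t := by
  have hcont : Continuous fun s : ℝ => ∑ i, (z i + s * (w i - z i)) := by fun_prop
  obtain ⟨s, ⟨hs0, hs1⟩, hs⟩ :=
    intermediate_value_Icc zero_le_one hcont.continuousOn (by simpa using ht)
  refine ⟨fun i => z i + s * (w i - z i), ⟨fun i => ?_, fun i => ?_⟩, hs⟩ <;>
    · have := sub_nonneg.2 (hzw i)
      dsimp only
      nlinarith

lemma sum_abs_sub_of_le {y z : ι → ℝ} (h : z ≤ y) :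
    ∑ i, |y i - z i| = ∑ i, y i - ∑ i, z i := by
  rw [← sum_sub_distrib]
  exact sum_congr rfl fun i _ => abs_of_nonneg (sub_nonneg.2 (h i))

lemma exists_mem_Icc_sum_eq_and_sum_abs_sub_eq {l u z : ι → ℝ} (hz : z ∈ Icc l u) {t : ℝ}
    (ht : t ∈ Icc (∑ i, l i) (∑ i, u i)) :
    ∃ y ∈ Icc l u, ∑ i, y i = t ∧ ∑ i, |z i - y i| = |∑ i, z i - t| := by
  rcases le_total (∑ i, z i) t with hzt | htz
  · obtain ⟨y, ⟨hzy, hyu⟩, rfl⟩ := exists_mem_Icc_sum_eq hz.2 ⟨hzt, ht.2⟩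
    refine ⟨y, ⟨hz.1.trans hzy, hyu⟩, rfl, ?_⟩
    simp_rw [abs_sub_comm (z _)]
    rw [sum_abs_sub_of_le hzy, abs_sub_comm, abs_of_nonneg (sub_nonneg.2 hzt)]
  · obtain ⟨y, ⟨hly, hyz⟩, rfl⟩ := exists_mem_Icc_sum_eq hz.1 ⟨ht.1, htz⟩
    refine ⟨y, ⟨hly, hyz.trans hz.2⟩, rfl, ?_⟩
    rw [sum_abs_sub_of_le hyz, abs_of_nonneg (sub_nonneg.2 htz)]

end SumAdjustment

lemma abs_sub_max_min_le {a b c d x : ℝ} (hx : x ∈ Icc a b) (hcd : c ≤ d) :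
    |x - max c (min x d)| ≤ max |a - c| |b - d| := by
  rcases le_total x c with hxc | hcx
  · rw [min_eq_left (hxc.trans hcd), max_eq_left hxc, abs_sub_comm, abs_sub_comm a]
    exact le_max_of_le_left (abs_le_abs_of_nonneg (by linarith) (by linarith [hx.1]))
  rcases le_total x d with hxd | hdx
  · simp [min_eq_left hxd, max_eq_right hcx]
  · rw [min_eq_right hdx, max_eq_right hcd]
    exact le_max_of_le_right (abs_le_abs_of_nonneg (by linarith) (by linarith [hx.2]))

def box {N : ℕ} (l u : Fin N → ℝ) : Set (E N) := {w | ∀ i, w i ∈ Icc (l i) (u i)}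

lemma exists_mem_box_inter_simplex_dist_le {N : ℕ} {a b c d : Fin N → ℝ}
    (hcd : ∀ i, c i ≤ d i) (hne : (box c d ∩ simplex N).Nonempty)
    {x : E N} (hx : x ∈ box a b ∩ simplex N) :
    ∃ y ∈ box c d ∩ simplex N, dist x y ≤ 2 * ∑ i, max |a i - c i| |b i - d i| := by
  obtain ⟨q, hqB, hq1, hq0⟩ := hne
  obtain ⟨hxA, hx1, hx0⟩ := hx
  set δ := ∑ i, max |a i - c i| |b i - d i|
  set z : Fin N → ℝ := fun i => max (c i) (min (x i) (d i))
  have hxz : ∑ i, |x i - z i| ≤ δ := sum_le_sum fun i _ => abs_sub_max_min_le (hxA i) (hcd i)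
  have hz1 : |∑ i, z i - 1| ≤ δ :=
    calc |∑ i, z i - 1| = |∑ i, (z i - x i)| := by rw [sum_sub_distrib, hx1]
      _ ≤ ∑ i, |z i - x i| := abs_sum_le_sum_abs _ _
      _ = ∑ i, |x i - z i| := by simp_rw [abs_sub_comm (z _)]
      _ ≤ δ := hxz
  have hz : z ∈ Icc (fun i => max (c i) 0) d :=
    ⟨fun i => max_le_max le_rfl (le_min (hx0 i) ((hq0 i).trans (hqB i).2)),
      fun i => max_le (hcd i) (min_le_right _ _)⟩
  have h1 : (1 : ℝ) ∈ Icc (∑ i, max (c i) 0) (∑ i, d i) := hq1 ▸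
    ⟨sum_le_sum fun i _ => max_le (hqB i).1 (hq0 i), sum_le_sum fun i _ => (hqB i).2⟩
  obtain ⟨y, ⟨hly, hyd⟩, hy1, hyz⟩ := exists_mem_Icc_sum_eq_and_sum_abs_sub_eq hz h1
  refine ⟨WithLp.toLp 2 y, ⟨fun i => ⟨(le_max_left _ _).trans (hly i), hyd i⟩, hy1,
    fun i => (le_max_right _ _).trans (hly i)⟩, ?_⟩
  calc dist x (WithLp.toLp 2 y) ≤ ∑ i, |x i - y i| := EuclideanSpace.dist_le_sum_abs _ _
    _ ≤ ∑ i, (|x i - z i| + |z i - y i|) := sum_le_sum fun i _ => abs_sub_le _ _ _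
    _ = ∑ i, |x i - z i| + ∑ i, |z i - y i| := sum_add_distrib
    _ ≤ δ + δ := add_le_add hxz (hyz.trans_le hz1)
    _ = 2 * δ := by ring

theorem stmt9 {N : ℕ} (a b c d : Fin N → ℝ)
    (hab : ∀ i, a i ≤ b i) (hcd : ∀ i, c i ≤ d i)
    (A B : Set (E N))
    (hA : A = {w | ∀ i, w i ∈ Set.Icc (a i) (b i)})
    (hB : B = {w | ∀ i, w i ∈ Set.Icc (c i) (d i)})
    (hAne : (A ∩ simplex N).Nonempty) (hBne : (B ∩ simplex N).Nonempty) :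
    Metric.hausdorffDist (A ∩ simplex N) (B ∩ simplex N) ≤
      4 * ∑ i, max |a i - c i| |b i - d i| := by
  subst hA hB
  set δ := ∑ i, max |a i - c i| |b i - d i|
  have hδ : 0 ≤ δ := sum_nonneg fun i _ => (abs_nonneg _).trans (le_max_left _ _)
  have hδ_symm : ∑ i, max |c i - a i| |d i - b i| = δ := by
    simp_rw [abs_sub_comm (c _), abs_sub_comm (d _)]
    rfl
  refine Metric.hausdorffDist_le_of_mem_dist (by positivity) (fun x hx => ?_) (fun x hx => ?_)
  · obtain ⟨y, hy, hxy⟩ := exists_mem_box_inter_simplex_dist_le hcd hBne hx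
    exact ⟨y, hy, by linarith⟩
  · obtain ⟨y, hy, hxy⟩ := exists_mem_box_inter_simplex_dist_le hab hAne hx
    exact ⟨y, hy, by linarith⟩
end
end
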